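/- arXiv:math/0406457 — 2 statements merged into one kernel-verified Lean document; each statement's English description precedes it below -/
import Mathlib

section
/- Fix a real ξ ≠ 0 and complex constants α_1, …, α_g. Let U ⊆ ℝ^g be a nonempty connected open set on which the function 2 − 𝐮(ξ) never vanishes. If Ψ_1, Ψ_2 : U → ℂ are smooth, nowhere vanishing, and both satisfy 𝓛Ψ_j = ξ⁻¹·Ψ_j and 𝓤_kΨ_j = α_k·Ψ_j for all k = 1, …, g, then there is a constant λ ∈ ℂ with Ψ_1 = λ·Ψ_2 on U. (The space of common eigenfunctions with these eigenvalues is one-dimensional.) -/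
open scoped BigOperators

/-- Partial derivative `∂_i` (1-based index) on functions of `t : Fin g → ℝ`;
`∂_i ≡ 0` for `i = 0` or `i > g` (in particular `∂_{g+1} ≡ 0`). -/
noncomputable def pd {g : ℕ} {E : Type*} [NormedAddCommGroup E] [NormedSpace ℝ E]
    (i : ℕ) (f : (Fin g → ℝ) → E) : (Fin g → ℝ) → E :=
  fun t => if h : 1 ≤ i ∧ i ≤ g then
    fderiv ℝ f t (Pi.single (⟨i - 1, by omega⟩ : Fin g) 1) else 0

/-- The Schrödinger operator `𝓛 f = ∂_x² f − u₁·f` on complex-valued functions. -/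
noncomputable def opLC {g : ℕ} (u : ℕ → (Fin g → ℝ) → ℝ)
    (f : (Fin g → ℝ) → ℂ) : (Fin g → ℝ) → ℂ :=
  fun t => pd 1 (pd 1 f) t - u 1 t • f t

/-- `𝓐_k f = ∂_x²∂_k f − (1/2)(u₁·∂_k f + ∂_k(u₁·f)) − (1/4)(u_k·∂_x f + ∂_x(u_k·f))`
on complex-valued functions. -/
noncomputable def opAC {g : ℕ} (u : ℕ → (Fin g → ℝ) → ℝ) (k : ℕ)
    (f : (Fin g → ℝ) → ℂ) : (Fin g → ℝ) → ℂ :=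
  fun t => pd 1 (pd 1 (pd k f)) t
    - (1/2 : ℝ) • (u 1 t • pd k f t + pd k (fun s => u 1 s • f s) t)
    - (1/4 : ℝ) • (u k t • pd 1 f t + pd 1 (fun s => u k s • f s) t)

/-- `𝓤_k f = 𝓐_k f − ∂_{k+1} f` on complex-valued functions. -/
noncomputable def opUC {g : ℕ} (u : ℕ → (Fin g → ℝ) → ℝ) (k : ℕ)
    (f : (Fin g → ℝ) → ℂ) : (Fin g → ℝ) → ℂ :=
  fun t => opAC u k f t - pd (k+1) f t

/-- The generating function `𝐮(ξ) = ∑_{i=1}^g u_i ξ^i`. -/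
noncomputable def bfu {g : ℕ} (u : ℕ → (Fin g → ℝ) → ℝ) (ξ : ℝ) :
    (Fin g → ℝ) → ℝ :=
  fun t => ∑ i ∈ Finset.Icc 1 g, u i t * ξ ^ i

/-- `𝐮'(ξ) = ∑_{i=1}^g u_i' ξ^i` (prime is `∂_x = ∂_1`). -/
noncomputable def bfu1 {g : ℕ} (u : ℕ → (Fin g → ℝ) → ℝ) (ξ : ℝ) :
    (Fin g → ℝ) → ℝ :=
  fun t => ∑ i ∈ Finset.Icc 1 g, pd 1 (u i) t * ξ ^ i

/-- `𝐮''(ξ) = ∑_{i=1}^g u_i'' ξ^i`. -/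
noncomputable def bfu2 {g : ℕ} (u : ℕ → (Fin g → ℝ) → ℝ) (ξ : ℝ) :
    (Fin g → ℝ) → ℝ :=
  fun t => ∑ i ∈ Finset.Icc 1 g, pd 1 (pd 1 (u i)) t * ξ ^ i

/-- `𝐮'''(ξ) = ∑_{i=1}^g u_i''' ξ^i`. -/
noncomputable def bfu3 {g : ℕ} (u : ℕ → (Fin g → ℝ) → ℝ) (ξ : ℝ) :
    (Fin g → ℝ) → ℝ :=
  fun t => ∑ i ∈ Finset.Icc 1 g, pd 1 (pd 1 (pd 1 (u i))) t * ξ ^ i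

/-!
Put `W_k = Ψ₂ ∂_kΨ₁ − Ψ₁ ∂_kΨ₂`. On an eigenfunction of `𝓛` the operator `𝓐_k` is of first
order, so `𝓤_kΨ = α_kΨ` expresses `∂_{k+1}Ψ` through `∂_kΨ`, `Ψ'` and `Ψ` with coefficients
that do not depend on `Ψ`; hence `W_{k+1} = ξ⁻¹W_k − (u_k/2)W_1`. This recurrence gives
`ξ^g W_{g+1} = W_1 (1 − 𝐮(ξ)/2)`, and `W_{g+1} = 0` since `∂_{g+1} = 0`, so `W_1 = 0` where
`2 − 𝐮(ξ) ≠ 0`, and then all `W_k` vanish. These are, up to the factor `Ψ₂²`, the partial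
derivatives of `Ψ₁/Ψ₂`, which is therefore constant on the connected open set `U`.
-/

section PartialDerivative

variable {g : ℕ} {E : Type*} [NormedAddCommGroup E] [NormedSpace ℝ E]

lemma pd_of_mem {i : ℕ} (hi : 1 ≤ i ∧ i ≤ g) (f : (Fin g → ℝ) → E) (t : Fin g → ℝ) :
    pd i f t = fderiv ℝ f t (Pi.single (⟨i - 1, by omega⟩ : Fin g) 1) := by
  simp [pd, hi]

lemma pd_of_not_mem {i : ℕ} (hi : ¬ (1 ≤ i ∧ i ≤ g)) (f : (Fin g → ℝ) → E) :
    pd i f = 0 := by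
  funext t
  simp [pd, hi]

@[simp]
lemma pd_zero (i : ℕ) : pd i (0 : (Fin g → ℝ) → E) = 0 := by
  funext t
  simp [pd]

lemma Filter.EventuallyEq.pd_eq {i : ℕ} {f f' : (Fin g → ℝ) → E} {t : Fin g → ℝ}
    (h : f =ᶠ[nhds t] f') : pd i f t = pd i f' t := by
  simp only [pd, h.fderiv_eq]

lemma pd_congr_of_isOpen {U : Set (Fin g → ℝ)} (hU : IsOpen U) {i : ℕ}
    {f f' : (Fin g → ℝ) → E} {t : Fin g → ℝ} (ht : t ∈ U) (h : Set.EqOn f f' U) :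
    pd i f t = pd i f' t :=
  (Filter.eventuallyEq_of_mem (hU.mem_nhds ht) h).pd_eq

lemma pd_add {i : ℕ} {f f' : (Fin g → ℝ) → E} {t : Fin g → ℝ}
    (hf : DifferentiableAt ℝ f t) (hf' : DifferentiableAt ℝ f' t) :
    pd i (fun s => f s + f' s) t = pd i f t + pd i f' t := by
  unfold pd
  split_ifs <;> simp [fderiv_fun_add hf hf']

lemma pd_const_smul {i : ℕ} (a : ℝ) {f : (Fin g → ℝ) → E} {t : Fin g → ℝ}
    (hf : DifferentiableAt ℝ f t) :
    pd i (fun s => a • f s) t = a • pd i f t := by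
  unfold pd
  split_ifs <;> simp [fderiv_fun_const_smul hf]

lemma pd_smul {i : ℕ} {c : (Fin g → ℝ) → ℝ} {f : (Fin g → ℝ) → E} {t : Fin g → ℝ}
    (hc : DifferentiableAt ℝ c t) (hf : DifferentiableAt ℝ f t) :
    pd i (fun s => c s • f s) t = pd i c t • f t + c t • pd i f t := by
  unfold pd
  split_ifs <;> simp [fderiv_fun_smul hc hf, add_comm]

lemma pd_mul {i : ℕ} {f f' : (Fin g → ℝ) → ℂ} {t : Fin g → ℝ}
    (hf : DifferentiableAt ℝ f t) (hf' : DifferentiableAt ℝ f' t) :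
    pd i (fun s => f s * f' s) t = pd i f t * f' t + f t * pd i f' t := by
  unfold pd
  split_ifs
  · simp [fderiv_fun_mul hf hf']
    ring
  · simp

lemma DifferentiableAt.fun_div' {𝕜 : Type*} [NontriviallyNormedField 𝕜] {F : Type*}
    [NormedAddCommGroup F] [NormedSpace 𝕜 F] {𝕜' : Type*} [NormedField 𝕜'] [NormedAlgebra 𝕜 𝕜']
    {f f' : F → 𝕜'} {x : F} (hf : DifferentiableAt 𝕜 f x) (hf' : DifferentiableAt 𝕜 f' x)
    (hx : f' x ≠ 0) : DifferentiableAt 𝕜 (fun s => f s / f' s) x := by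
  simpa only [div_eq_mul_inv] using hf.fun_mul (hf'.fun_inv hx)

lemma pd_div_mul_sq {i : ℕ} {f f' : (Fin g → ℝ) → ℂ} {t : Fin g → ℝ}
    (hf : DifferentiableAt ℝ f t) (hf' : DifferentiableAt ℝ f' t) (ht : f' t ≠ 0) :
    pd i (fun s => f s / f' s) t * f' t ^ 2 = f' t * pd i f t - f t * pd i f' t := by
  have hf_eq : f =ᶠ[nhds t] fun s => f s / f' s * f' s := by
    filter_upwards [hf'.continuousAt.eventually_ne ht] with s hs
    rw [div_mul_cancel₀ _ hs]
  rw [hf_eq.pd_eq, pd_mul (hf.fun_div' hf' ht) hf']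
  field_simp
  ring

lemma fderiv_eq_zero_of_pd_eq_zero {f : (Fin g → ℝ) → E} {t : Fin g → ℝ}
    (h : ∀ i : Fin g, pd (i + 1) f t = 0) : fderiv ℝ f t = 0 := by
  apply ContinuousLinearMap.coe_injective
  refine LinearMap.pi_ext' fun i => LinearMap.ext_ring ?_
  exact (pd_of_mem (i := i + 1) ⟨by omega, i.isLt⟩ f t).symm.trans (h i)

variable {U : Set (Fin g → ℝ)} {f : (Fin g → ℝ) → E}

lemma ContDiffOn.differentiableAt_of_isOpen (hf : ContDiffOn ℝ (⊤ : ℕ∞) f U)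
    (hU : IsOpen U) {t : Fin g → ℝ} (ht : t ∈ U) : DifferentiableAt ℝ f t :=
  ((hf t ht).contDiffAt (hU.mem_nhds ht)).differentiableAt (by simp)

lemma ContDiffOn.pd (hf : ContDiffOn ℝ (⊤ : ℕ∞) f U) (hU : IsOpen U) (i : ℕ) :
    ContDiffOn ℝ (⊤ : ℕ∞) (pd i f) U := by
  by_cases hi : 1 ≤ i ∧ i ≤ g
  · have hf' : ContDiffOn ℝ (⊤ : ℕ∞) (fderiv ℝ f) U :=
      ((contDiffOn_infty_iff_fderiv_of_isOpen hU).1 (by exact_mod_cast hf)).2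
    exact (hf'.clm_apply contDiffOn_const).congr fun t _ => pd_of_mem hi f t
  · rw [pd_of_not_mem hi]
    exact contDiffOn_const

lemma pd_comm (hf : ContDiffOn ℝ (⊤ : ℕ∞) f U) (hU : IsOpen U) (i j : ℕ)
    {t : Fin g → ℝ} (ht : t ∈ U) : pd i (pd j f) t = pd j (pd i f) t := by
  by_cases hi : 1 ≤ i ∧ i ≤ g
  · by_cases hj : 1 ≤ j ∧ j ≤ g
    · have hf' : DifferentiableAt ℝ (fderiv ℝ f) t :=
        ((contDiffOn_infty_iff_fderiv_of_isOpen hU).1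
          (by exact_mod_cast hf)).2.differentiableAt_of_isOpen hU ht
      have hsymm : IsSymmSndFDerivAt ℝ f t :=
        ((hf t ht).contDiffAt (hU.mem_nhds ht)).isSymmSndFDerivAt (by simp; norm_cast)
      have hsecond : ∀ a b (ha : 1 ≤ a ∧ a ≤ g) (hb : 1 ≤ b ∧ b ≤ g),
          pd a (pd b f) t = fderiv ℝ (fderiv ℝ f) t (Pi.single (⟨a - 1, by omega⟩ : Fin g) 1)
            (Pi.single (⟨b - 1, by omega⟩ : Fin g) 1) := by
        intro a b ha hb
        rw [pd_of_mem ha, funext (pd_of_mem hb f), fderiv_clm_apply hf' (differentiableAt_const _)]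
        simp
      rw [hsecond i j hi hj, hsecond j i hj hi, hsymm.eq]
    · simp [pd_of_not_mem hj (f := f), pd_of_not_mem hj (f := pd i f)]
  · simp [pd_of_not_mem hi (f := f), pd_of_not_mem hi (f := pd j f)]

end PartialDerivative

section Recurrence

variable {K : Type*} [Field K] {ξ : K} {c w : ℕ → K}

lemma pow_mul_eq_of_recurrence (hξ : ξ ≠ 0) {n : ℕ}
    (hrec : ∀ k, 1 ≤ k → k ≤ n → w (k + 1) = ξ⁻¹ * w k - c k * w 1) :
    ∀ k ≤ n, ξ ^ k * w (k + 1) = w 1 * (1 - ∑ i ∈ Finset.Icc 1 k, c i * ξ ^ i) := by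
  intro k hk
  induction k with
  | zero => simp
  | succ k ih =>
    rw [Finset.sum_Icc_succ_top (by omega), hrec (k + 1) (by omega) hk]
    linear_combination ih (by omega) + ξ ^ k * w (k + 1) * mul_inv_cancel₀ hξ

lemma eq_zero_of_recurrence (hξ : ξ ≠ 0) {n : ℕ}
    (hrec : ∀ k, 1 ≤ k → k ≤ n → w (k + 1) = ξ⁻¹ * w k - c k * w 1)
    (htop : w (n + 1) = 0) (hc : 1 - ∑ i ∈ Finset.Icc 1 n, c i * ξ ^ i ≠ 0) :
    ∀ k ≤ n, w (k + 1) = 0 := by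
  have hw : ∀ k ≤ n, ξ ^ k * w (k + 1) = w 1 * (1 - ∑ i ∈ Finset.Icc 1 k, c i * ξ ^ i) :=
    pow_mul_eq_of_recurrence hξ hrec
  have hw₁ : w 1 = 0 := by
    simpa [htop, hc] using (hw n le_rfl).symm
  intro k hk
  simpa [hw₁, hξ] using hw k hk

end Recurrence

section Eigenfunction

variable {g : ℕ} {u : ℕ → (Fin g → ℝ) → ℝ} {U : Set (Fin g → ℝ)} {Ψ : (Fin g → ℝ) → ℂ}
  {c : ℝ} {t : Fin g → ℝ}

lemma opAC_eq_of_opLC_eq (hU : IsOpen U) (hΨ : ContDiffOn ℝ (⊤ : ℕ∞) Ψ U)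
    (hL : ∀ s ∈ U, opLC u Ψ s = (c : ℂ) * Ψ s) (k : ℕ) (ht : t ∈ U)
    (hu₁ : DifferentiableAt ℝ (u 1) t) (huk : DifferentiableAt ℝ (u k) t) :
    opAC u k Ψ t = c • pd k Ψ t + (pd k (u 1) t / 2) • Ψ t
      - (u k t / 2) • pd 1 Ψ t - (pd 1 (u k) t / 4) • Ψ t := by
  have hΨt : DifferentiableAt ℝ Ψ t := hΨ.differentiableAt_of_isOpen hU ht
  have hcomm : pd 1 (pd 1 (pd k Ψ)) t = pd k (pd 1 (pd 1 Ψ)) t := by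
    rw [pd_congr_of_isOpen hU ht fun s hs => pd_comm hΨ hU 1 k hs]
    exact pd_comm (hΨ.pd hU 1) hU 1 k ht
  have hΨ'' : Set.EqOn (pd 1 (pd 1 Ψ)) (fun s => u 1 s • Ψ s + c • Ψ s) U := fun s hs => by
    have := hL s hs
    simp only [opLC, Complex.real_smul] at this ⊢
    linear_combination this
  unfold opAC
  rw [hcomm, pd_congr_of_isOpen hU ht hΨ'', pd_add (hu₁.fun_smul hΨt) (hΨt.fun_const_smul c),
    pd_smul hu₁ hΨt, pd_const_smul c hΨt, pd_smul huk hΨt]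
  module

lemma pd_succ_eq_of_eigen (hU : IsOpen U) (hΨ : ContDiffOn ℝ (⊤ : ℕ∞) Ψ U)
    (hL : ∀ s ∈ U, opLC u Ψ s = (c : ℂ) * Ψ s) {k : ℕ} {a : ℂ} (ht : t ∈ U)
    (hUk : opUC u k Ψ t = a * Ψ t)
    (hu₁ : DifferentiableAt ℝ (u 1) t) (huk : DifferentiableAt ℝ (u k) t) :
    pd (k + 1) Ψ t = c * pd k Ψ t - (u k t / 2 : ℝ) * pd 1 Ψ t
      + ((pd k (u 1) t / 2 - pd 1 (u k) t / 4 : ℝ) - a) * Ψ t := by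
  rw [opUC, opAC_eq_of_opLC_eq hU hΨ hL k ht hu₁ huk] at hUk
  simp only [Complex.real_smul] at hUk
  push_cast at hUk ⊢
  linear_combination -hUk

end Eigenfunction

lemma wronskian_pd_eq_zero {g : ℕ} {u : ℕ → (Fin g → ℝ) → ℝ} (hu : ∀ i, Differentiable ℝ (u i))
    {ξ : ℝ} (hξ : ξ ≠ 0) {α : ℕ → ℂ} {U : Set (Fin g → ℝ)} (hU : IsOpen U)
    {Ψ₁ Ψ₂ : (Fin g → ℝ) → ℂ}
    (hΨ₁ : ContDiffOn ℝ (⊤ : ℕ∞) Ψ₁ U) (hΨ₂ : ContDiffOn ℝ (⊤ : ℕ∞) Ψ₂ U)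
    (hL₁ : ∀ s ∈ U, opLC u Ψ₁ s = ((ξ⁻¹ : ℝ) : ℂ) * Ψ₁ s)
    (hL₂ : ∀ s ∈ U, opLC u Ψ₂ s = ((ξ⁻¹ : ℝ) : ℂ) * Ψ₂ s)
    {t : Fin g → ℝ} (ht : t ∈ U) (hnv : 2 - bfu u ξ t ≠ 0)
    (hU₁ : ∀ k, 1 ≤ k → k ≤ g → opUC u k Ψ₁ t = α k * Ψ₁ t)
    (hU₂ : ∀ k, 1 ≤ k → k ≤ g → opUC u k Ψ₂ t = α k * Ψ₂ t) :
    ∀ k ≤ g, Ψ₂ t * pd (k + 1) Ψ₁ t - Ψ₁ t * pd (k + 1) Ψ₂ t = 0 := by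
  refine eq_zero_of_recurrence (ξ := (ξ : ℂ)) (c := fun k => ((u k t / 2 : ℝ) : ℂ))
    (w := fun k => Ψ₂ t * pd k Ψ₁ t - Ψ₁ t * pd k Ψ₂ t) (by exact_mod_cast hξ) ?_ ?_ ?_
  · intro k hk hkg
    have h₁ := pd_succ_eq_of_eigen hU hΨ₁ hL₁ ht (hU₁ k hk hkg) (hu 1 t) (hu k t)
    have h₂ := pd_succ_eq_of_eigen hU hΨ₂ hL₂ ht (hU₂ k hk hkg) (hu 1 t) (hu k t)
    push_cast at h₁ h₂ ⊢
    linear_combination Ψ₂ t * h₁ - Ψ₁ t * h₂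
  · simp [pd_of_not_mem (g := g) (i := g + 1) (by omega)]
  · have hsum : 1 - ∑ i ∈ Finset.Icc 1 g, ((u i t / 2 : ℝ) : ℂ) * (ξ : ℂ) ^ i
        = (((2 - bfu u ξ t) / 2 : ℝ) : ℂ) := by
      simp only [bfu]
      push_cast
      rw [sub_div, Finset.sum_div, div_self two_ne_zero]
      exact congrArg _ (Finset.sum_congr rfl fun i _ => by ring)
    rw [hsum]
    exact_mod_cast div_ne_zero hnv two_ne_zero

theorem statement8_general (g : ℕ) (u : ℕ → (Fin g → ℝ) → ℝ)
    (hu : ∀ i, ContDiff ℝ (⊤ : ℕ∞) (u i))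
    (ξ : ℝ) (hξ : ξ ≠ 0) (α : ℕ → ℂ)
    (U : Set (Fin g → ℝ)) (hUo : IsOpen U) (hUc : IsPreconnected U)
    (hnv : ∀ t ∈ U, 2 - bfu u ξ t ≠ 0)
    (Ψ₁ Ψ₂ : (Fin g → ℝ) → ℂ)
    (hΨ₁ : ContDiffOn ℝ (⊤ : ℕ∞) Ψ₁ U) (hΨ₂ : ContDiffOn ℝ (⊤ : ℕ∞) Ψ₂ U)
    (hz₂ : ∀ t ∈ U, Ψ₂ t ≠ 0)
    (hL₁ : ∀ t ∈ U, opLC u Ψ₁ t = ((ξ⁻¹ : ℝ) : ℂ) * Ψ₁ t)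
    (hL₂ : ∀ t ∈ U, opLC u Ψ₂ t = ((ξ⁻¹ : ℝ) : ℂ) * Ψ₂ t)
    (hU₁ : ∀ k, 1 ≤ k → k ≤ g → ∀ t ∈ U, opUC u k Ψ₁ t = α k * Ψ₁ t)
    (hU₂ : ∀ k, 1 ≤ k → k ≤ g → ∀ t ∈ U, opUC u k Ψ₂ t = α k * Ψ₂ t) :
    ∃ lam : ℂ, ∀ t ∈ U, Ψ₁ t = lam * Ψ₂ t := by
  have hu' : ∀ i, Differentiable ℝ (u i) := fun i => (hu i).differentiable (by simp)
  have hd₁ := fun t (ht : t ∈ U) => hΨ₁.differentiableAt_of_isOpen hUo ht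
  have hd₂ := fun t (ht : t ∈ U) => hΨ₂.differentiableAt_of_isOpen hUo ht
  have hquot : ∀ t ∈ U, ∀ i : Fin g, pd (i + 1) (fun s => Ψ₁ s / Ψ₂ s) t = 0 := by
    intro t ht i
    have hW := wronskian_pd_eq_zero hu' hξ hUo hΨ₁ hΨ₂ hL₁ hL₂ ht (hnv t ht)
      (fun k hk hkg => hU₁ k hk hkg t ht) (fun k hk hkg => hU₂ k hk hkg t ht) i i.isLt.le
    have h := pd_div_mul_sq (i := i + 1) (hd₁ t ht) (hd₂ t ht) (hz₂ t ht)
    rw [hW] at h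
    simpa [hz₂ t ht] using h
  obtain ⟨lam, hlam⟩ := hUo.exists_is_const_of_fderiv_eq_zero hUc
    (fun t ht => ((hd₁ t ht).fun_div' (hd₂ t ht) (hz₂ t ht)).differentiableWithinAt)
    (fun t ht => fderiv_eq_zero_of_pd_eq_zero (hquot t ht))
  exact ⟨lam, fun t ht => by rw [← hlam t ht, div_mul_cancel₀ _ (hz₂ t ht)]⟩

/-- Fix real `ξ ≠ 0` and complex constants `α_1, …, α_g`. Let `U` be a
nonempty connected open set on which `2 − 𝐮(ξ)` never vanishes. If `Ψ_1, Ψ_2` are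
smooth, nowhere vanishing on `U`, and both satisfy `𝓛Ψ = ξ⁻¹·Ψ` and `𝓤_kΨ = α_k·Ψ`
for all `k`, then `Ψ_1 = λ·Ψ_2` on `U` for some constant `λ ∈ ℂ`. -/
theorem statement8 (g : ℕ) (hg : 1 ≤ g) (u : ℕ → (Fin g → ℝ) → ℝ)
    (hu : ∀ i, ContDiff ℝ (⊤ : ℕ∞) (u i))
    (ξ : ℝ) (hξ : ξ ≠ 0) (α : ℕ → ℂ)
    (U : Set (Fin g → ℝ)) (hUne : U.Nonempty) (hUo : IsOpen U) (hUc : IsPreconnected U)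
    (hnv : ∀ t ∈ U, 2 - bfu u ξ t ≠ 0)
    (Ψ₁ Ψ₂ : (Fin g → ℝ) → ℂ)
    (hΨ₁ : ContDiffOn ℝ (⊤ : ℕ∞) Ψ₁ U) (hΨ₂ : ContDiffOn ℝ (⊤ : ℕ∞) Ψ₂ U)
    (hz₁ : ∀ t ∈ U, Ψ₁ t ≠ 0) (hz₂ : ∀ t ∈ U, Ψ₂ t ≠ 0)
    (hL₁ : ∀ t ∈ U, opLC u Ψ₁ t = ((ξ⁻¹ : ℝ) : ℂ) * Ψ₁ t)
    (hL₂ : ∀ t ∈ U, opLC u Ψ₂ t = ((ξ⁻¹ : ℝ) : ℂ) * Ψ₂ t)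
    (hU₁ : ∀ k, 1 ≤ k → k ≤ g → ∀ t ∈ U, opUC u k Ψ₁ t = α k * Ψ₁ t)
    (hU₂ : ∀ k, 1 ≤ k → k ≤ g → ∀ t ∈ U, opUC u k Ψ₂ t = α k * Ψ₂ t) :
    ∃ lam : ℂ, ∀ t ∈ U, Ψ₁ t = lam * Ψ₂ t :=
  statement8_general g u hu ξ hξ α U hUo hUc hnv Ψ₁ Ψ₂ hΨ₁ hΨ₂ hz₂ hL₁ hL₂ hU₁ hU₂
end

section
/- Fix a real ξ ≠ 0 and real constants α_1, …, α_g, and set α(ξ) = ∑_{i=1}^g α_i ξ^i. Assume that at every point t ∈ ℝ^g one has 16·α(ξ)² = 𝐮'(ξ)² + 2𝐮''(ξ)(2 − 𝐮(ξ)) + 4(ξ⁻¹ + u_1)(2 − 𝐮(ξ))². Then on the open set where 2 − 𝐮(ξ) ≠ 0, the function χ := (4α(ξ) − 𝐮'(ξ))/(2(2 − 𝐮(ξ))) satisfies the Riccati equation ∂_xχ + χ² = u_1 + ξ⁻¹. -/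
/-!
Write `χ = N / D` with `N = 4α(ξ) - 𝐮'(ξ)` and `D = 2(2 - 𝐮(ξ))`. Since `N' = -𝐮''(ξ)` and
`D' = -2𝐮'(ξ)`, the quotient rule gives `D² (χ' + χ²) = N² + 2𝐮'(ξ) N - 2𝐮''(ξ)(2 - 𝐮(ξ))`, and
`N² + 2𝐮'(ξ) N = 16α(ξ)² - 𝐮'(ξ)²`; the hypothesis turns the right-hand side into
`4(ξ⁻¹ + u_1)(2 - 𝐮(ξ))² = (ξ⁻¹ + u_1) D²`.
-/

open scoped BigOperators

section PartialDerivative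

variable {g k : ℕ} {f h : (Fin g → ℝ) → ℝ} {t : Fin g → ℝ}

theorem contDiff_pd {n : WithTop ℕ∞} (hf : ContDiff ℝ (n + 1) f) : ContDiff ℝ n (pd k f) := by
  unfold pd
  by_cases hk : 1 ≤ k ∧ k ≤ g
  · simp only [dif_pos hk]
    exact (hf.fderiv_right le_rfl).clm_apply contDiff_const
  · simp only [dif_neg hk]
    exact contDiff_const

theorem pd_const_sub (c : ℝ) : pd k (fun s => c - f s) t = -pd k f t := by
  unfold pd
  split_ifs <;> simp [fderiv_const_sub]

theorem pd_const_mul (hf : DifferentiableAt ℝ f t) (c : ℝ) :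
    pd k (fun s => c * f s) t = c * pd k f t := by
  unfold pd
  split_ifs <;> simp [fderiv_const_mul hf]

theorem pd_sum_mul_const {ι : Type*} (I : Finset ι) {F : ι → (Fin g → ℝ) → ℝ} (c : ι → ℝ)
    (hF : ∀ i ∈ I, DifferentiableAt ℝ (F i) t) :
    pd k (fun s => ∑ i ∈ I, F i s * c i) t = ∑ i ∈ I, pd k (F i) t * c i := by
  unfold pd
  split_ifs
  · rw [fderiv_fun_sum fun i hi => (hF i hi).mul_const (c i), sum_apply]
    exact Finset.sum_congr rfl fun i hi => by simp [fderiv_mul_const (hF i hi), mul_comm]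
  · simp

theorem pd_div (hf : DifferentiableAt ℝ f t) (hh : DifferentiableAt ℝ h t) (ht : h t ≠ 0) :
    pd k (fun s => f s / h s) t = (pd k f t * h t - f t * pd k h t) / h t ^ 2 := by
  unfold pd
  split_ifs
  · have := hf.hasFDerivAt.mul ((hasFDerivAt_inv ht).comp t hh.hasFDerivAt)
    rw [show (fun s => f s / h s) = f * (fun x => x⁻¹) ∘ h from funext fun s => div_eq_mul_inv _ _,
      this.fderiv]
    simp only [Function.comp_apply, add_apply, smul_apply, ContinuousLinearMap.comp_apply,
      ContinuousLinearMap.toSpanSingleton_apply, smul_eq_mul]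
    field_simp
    ring
  · simp

end PartialDerivative

section GeneratingFunction

variable {g : ℕ} {u : ℕ → (Fin g → ℝ) → ℝ} {t : Fin g → ℝ}

theorem pd_one_bfu (hu : ∀ i, DifferentiableAt ℝ (u i) t) (ξ : ℝ) :
    pd 1 (bfu u ξ) t = bfu1 u ξ t :=
  pd_sum_mul_const _ _ fun i _ => hu i

theorem pd_one_bfu1 (hu : ∀ i, DifferentiableAt ℝ (pd 1 (u i)) t) (ξ : ℝ) :
    pd 1 (bfu1 u ξ) t = bfu2 u ξ t :=
  pd_sum_mul_const _ _ fun i _ => hu i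

end GeneratingFunction

theorem riccati_of_quadratic_relation {A U U₁ U₂ w : ℝ} (hU : 2 - U ≠ 0)
    (h : 16 * A ^ 2 = U₁ ^ 2 + 2 * U₂ * (2 - U) + 4 * w * (2 - U) ^ 2) :
    (-U₂ * (2 * (2 - U)) - (4 * A - U₁) * (2 * -U₁)) / (2 * (2 - U)) ^ 2
      + ((4 * A - U₁) / (2 * (2 - U))) ^ 2 = w := by
  field_simp
  linear_combination h

theorem statement12_general (g : ℕ) (u : ℕ → (Fin g → ℝ) → ℝ)
    (hu : ∀ i, ContDiff ℝ (⊤ : ℕ∞) (u i))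
    (ξ : ℝ) (α : ℕ → ℝ)
    (h4mu : ∀ t, 16 * (∑ i ∈ Finset.Icc 1 g, α i * ξ ^ i) ^ 2
      = bfu1 u ξ t ^ 2 + 2 * bfu2 u ξ t * (2 - bfu u ξ t)
        + 4 * (ξ⁻¹ + u 1 t) * (2 - bfu u ξ t) ^ 2) :
    ∀ t, 2 - bfu u ξ t ≠ 0 →
      pd 1 (fun s => (4 * (∑ i ∈ Finset.Icc 1 g, α i * ξ ^ i) - bfu1 u ξ s)
          / (2 * (2 - bfu u ξ s))) t
        + ((4 * (∑ i ∈ Finset.Icc 1 g, α i * ξ ^ i) - bfu1 u ξ t)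
          / (2 * (2 - bfu u ξ t))) ^ 2
      = u 1 t + ξ⁻¹ := by
  intro t ht
  have hu2 : ∀ i, ContDiff ℝ 2 (u i) := fun i => (hu i).of_le (WithTop.coe_le_coe.mpr le_top)
  have hdu : ∀ i, DifferentiableAt ℝ (u i) t := fun i => (hu2 i).differentiable two_ne_zero t
  have hdu' : ∀ i, DifferentiableAt ℝ (pd 1 (u i)) t := fun i =>
    (contDiff_pd (hu2 i)).differentiable one_ne_zero t
  have hdU : DifferentiableAt ℝ (bfu u ξ) t := by unfold bfu; fun_prop
  have hdU' : DifferentiableAt ℝ (bfu1 u ξ) t := by unfold bfu1; fun_prop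
  rw [pd_div (by fun_prop) (by fun_prop) (mul_ne_zero two_ne_zero ht), pd_const_sub,
    pd_const_mul (by fun_prop), pd_const_sub, pd_one_bfu hdu, pd_one_bfu1 hdu', add_comm (u 1 t)]
  exact riccati_of_quadratic_relation ht (h4mu t)

/-- Fix real `ξ ≠ 0` and real constants `α_1, …, α_g`, with
`α(ξ) = ∑ α_i ξ^i`. If at every point `16·α(ξ)² = 𝐮'(ξ)² + 2𝐮''(ξ)(2 − 𝐮(ξ)) +
4(ξ⁻¹ + u_1)(2 − 𝐮(ξ))²`, then on the set where `2 − 𝐮(ξ) ≠ 0` the function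
`χ = (4α(ξ) − 𝐮'(ξ))/(2(2 − 𝐮(ξ)))` satisfies the Riccati equation
`∂_xχ + χ² = u_1 + ξ⁻¹`. -/
theorem statement12 (g : ℕ) (hg : 1 ≤ g) (u : ℕ → (Fin g → ℝ) → ℝ)
    (hu : ∀ i, ContDiff ℝ (⊤ : ℕ∞) (u i))
    (ξ : ℝ) (hξ : ξ ≠ 0) (α : ℕ → ℝ)
    (h4mu : ∀ t, 16 * (∑ i ∈ Finset.Icc 1 g, α i * ξ ^ i) ^ 2
      = bfu1 u ξ t ^ 2 + 2 * bfu2 u ξ t * (2 - bfu u ξ t)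
        + 4 * (ξ⁻¹ + u 1 t) * (2 - bfu u ξ t) ^ 2) :
    ∀ t, 2 - bfu u ξ t ≠ 0 →
      pd 1 (fun s => (4 * (∑ i ∈ Finset.Icc 1 g, α i * ξ ^ i) - bfu1 u ξ s)
          / (2 * (2 - bfu u ξ s))) t
        + ((4 * (∑ i ∈ Finset.Icc 1 g, α i * ξ ^ i) - bfu1 u ξ t)
          / (2 * (2 - bfu u ξ t))) ^ 2
      = u 1 t + ξ⁻¹ :=
  statement12_general g u hu ξ α h4mu
end
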